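/- arXiv:1311.2748 — 2 statements merged into one kernel-verified Lean document; each statement's English description precedes it below -/
import Mathlib

section
/- Let G be a graph of order n having a dominating induced matching M with |M| = m. Then the largest eigenvalue q₁ of the signless Laplacian Q(G) satisfies q₁ ≤ (2 + n + √((2+n)² − 16m))/2. -/
open Matrix Finset
open scoped Classical

def edgesShare {V : Type*} (e f : Sym2 V) : Prop := ∃ v, v ∈ e ∧ v ∈ f

def matchedVert {V : Type*} (M : Finset (Sym2 V)) (v : V) : Prop := ∃ e ∈ M, v ∈ e

/-- `M` is a set of edges of `G`, pairwise not sharing end-vertices. -/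
def IsMatchingSet {V : Type*} (G : SimpleGraph V) (M : Finset (Sym2 V)) : Prop :=
  (∀ e ∈ M, e ∈ G.edgeSet) ∧ ∀ e ∈ M, ∀ f ∈ M, e ≠ f → ¬ edgesShare e f

/-- Dominating induced matching: every edge of `G` is in `M` or shares an
end-vertex with exactly one edge of `M`. -/
def IsDIM {V : Type*} (G : SimpleGraph V) (M : Finset (Sym2 V)) : Prop :=
  IsMatchingSet G M ∧ ∀ e ∈ G.edgeSet, e ∉ M → ∃! f, f ∈ M ∧ edgesShare e f

/-- Induced matching: the subgraph induced by the matched vertices consists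
exactly of the edges of `M`. -/
def IsInducedMatching {V : Type*} (G : SimpleGraph V) (M : Finset (Sym2 V)) : Prop :=
  IsMatchingSet G M ∧ ∀ e ∈ G.edgeSet, (∀ v ∈ e, matchedVert M v) → e ∈ M

/-- Complete dominating induced matching: a DIM such that the set of unmatched
vertices is nonempty and every matched vertex is adjacent to every unmatched vertex,
i.e. `E(G) = M ∪ {xy : x ∈ V(M), y ∉ V(M)}`. -/
def IsCompleteDIM {V : Type*} (G : SimpleGraph V) (M : Finset (Sym2 V)) : Prop :=
  IsDIM G M ∧ (∃ v, ¬ matchedVert M v) ∧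
    ∀ x y : V, matchedVert M x → ¬ matchedVert M y → G.Adj x y

/-! A graph with a dominating induced matching `M` of size `m` is a subgraph of the join of `mK₂`
(the edges of `M`) with the edgeless graph on the `n - 2m` unmatched vertices, and the quadratic
form `xᵀQx = ∑_{uv ∈ E} (x_u + x_v)²` of the signless Laplacian is monotone in the edge set. For
the join, let `P` and `R` be the squared mass of a vector `x` on the matched and unmatched
vertices; the matching edges contribute at most `4P` and Cauchy–Schwarz bounds the cross terms,
which leaves the Rayleigh quotient of a `2 × 2` matrix with characteristic polynomial
`t² - (n + 2) t + 4m`. Hence `xᵀQx ≤ t ‖x‖²` for its larger root `t`, in particular for an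
eigenvector `x`. -/

theorem Matrix.exists_mulVec_eq_smul_of_mem_spectrum {n K : Type*} [Fintype n] [DecidableEq n]
    [Field K] {A : Matrix n n K} {μ : K} (h : μ ∈ spectrum K A) :
    ∃ v ≠ 0, A *ᵥ v = μ • v := by
  rw [← spectrum_toLin'] at h
  obtain ⟨v, hv⟩ := (Module.End.HasEigenvalue.of_mem_spectrum h).exists_hasEigenvector
  exact ⟨v, hv.2, hv.apply_eq_smul⟩

theorem Finset.sum_sum_add_sq {ι R : Type*} [CommSemiring R] (x : ι → R) (A B : Finset ι) :
    ∑ i ∈ A, ∑ j ∈ B, (x i + x j) ^ 2 =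
      #B * ∑ i ∈ A, x i ^ 2 + 2 * (∑ i ∈ A, x i) * (∑ j ∈ B, x j) + #A * ∑ j ∈ B, x j ^ 2 := by
  simp_rw [add_sq, sum_add_distrib, sum_const, nsmul_eq_mul, ← mul_sum, ← sum_mul, mul_sum]

theorem Finset.sum_sum_ite_mem_and_mem {ι κ R : Type*} [Fintype ι] [Fintype κ] [DecidableEq ι]
    [DecidableEq κ] [AddCommMonoid R] (A : Finset ι) (B : Finset κ) (f : ι → κ → R) :
    ∑ i, ∑ j, (if i ∈ A ∧ j ∈ B then f i j else 0) = ∑ i ∈ A, ∑ j ∈ B, f i j := by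
  simp only [ite_and, sum_ite_irrel, sum_const_zero, ← sum_filter, filter_mem_eq_inter,
    univ_inter]

/- `t` is the largest eigenvalue of the symmetric matrix `[[b + 2, √(ab)], [√(ab), a]]`, and the
inequality is its Rayleigh bound at the vector `(√P, √R)`. -/
theorem add_two_mul_mul_le_of_sq_le {a b P R X Y : ℝ} (ha : 0 ≤ a) (hb : 0 ≤ b) (hP : 0 ≤ P)
    (hR : 0 ≤ R) (hX : X ^ 2 ≤ a * P) (hY : Y ^ 2 ≤ b * R) :
    (b + 2) * P + a * R + 2 * X * Y ≤
      (a + b + 2 + √((a + b + 2) ^ 2 - 8 * a)) / 2 * (P + R) := by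
  set s := √((a + b + 2) ^ 2 - 8 * a)
  have hs : s ^ 2 = (a - b - 2) ^ 2 + 4 * a * b := by
    rw [Real.sq_sqrt (by nlinarith [sq_nonneg (a - b - 2), mul_nonneg ha hb])]; ring
  have hs_abs : |a - b - 2| ≤ s := abs_le_of_sq_le_sq (by nlinarith [mul_nonneg ha hb])
    (Real.sqrt_nonneg _)
  set u := (a - b - 2 + s) / 2 with hu_def
  set v := (b + 2 - a + s) / 2 with hv_def
  have hu : 0 ≤ u := by linarith [neg_abs_le (a - b - 2)]
  have hv : 0 ≤ v := by linarith [le_abs_self (a - b - 2)]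
  have huv : u * v = a * b := by linear_combination hs / 4
  have hsq : (2 * X * Y) ^ 2 ≤ (u * P + v * R) ^ 2 := by
    nlinarith [sq_nonneg (u * P - v * R), mul_le_mul hX hY (sq_nonneg Y) (mul_nonneg ha hP),
      mul_nonneg hP hR]
  calc (b + 2) * P + a * R + 2 * X * Y
      ≤ (b + 2) * P + a * R + (u * P + v * R) := by
        gcongr
        exact le_abs_self _ |>.trans <|
          abs_le_of_sq_le_sq hsq (add_nonneg (mul_nonneg hu hP) (mul_nonneg hv hR))
    _ = (a + b + 2 + s) / 2 * (P + R) := by rw [hu_def, hv_def]; ring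

namespace SimpleGraph

variable {V : Type*} [Fintype V] [DecidableEq V]

def signlessLapMatrix (R : Type*) [AddMonoidWithOne R] (G : SimpleGraph V) [DecidableRel G.Adj] :
    Matrix V V R :=
  G.degMatrix R + G.adjMatrix R

theorem dotProduct_signlessLapMatrix_mulVec {R : Type*} [Field R] [CharZero R]
    (G : SimpleGraph V) [DecidableRel G.Adj] (x : V → R) :
    x ⬝ᵥ (G.signlessLapMatrix R *ᵥ x) =
      (∑ i, ∑ j, if G.Adj i j then (x i + x j) ^ 2 else 0) / 2 := by
  simp_rw [signlessLapMatrix, add_mulVec, dotProduct_add, dotProduct_mulVec_degMatrix,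
    dotProduct_mulVec_adjMatrix, ← sum_add_distrib, degree_eq_sum_if_adj, sum_mul, ite_mul,
    one_mul, zero_mul, ← sum_add_distrib, ite_add_ite, add_zero]
  rw [← add_self_div_two (∑ i : V, ∑ j : V, _)]
  conv_lhs => enter [1, 2, 2, i, 2, j]; rw [if_congr (G.adj_comm i j) rfl rfl]
  conv_lhs => enter [1, 2]; rw [Finset.sum_comm]
  simp_rw [← sum_add_distrib, ite_add_ite]
  congr 2 with i
  congr 2 with j
  ring_nf

theorem dotProduct_signlessLapMatrix_mulVec_mono {G H : SimpleGraph V} [DecidableRel G.Adj]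
    [DecidableRel H.Adj] (h : G ≤ H) (x : V → ℝ) :
    x ⬝ᵥ (G.signlessLapMatrix ℝ *ᵥ x) ≤ x ⬝ᵥ (H.signlessLapMatrix ℝ *ᵥ x) := by
  simp only [dotProduct_signlessLapMatrix_mulVec]
  gcongr with i _ j _
  split_ifs with hG hH
  exacts [le_rfl, absurd (h hG) hH, sq_nonneg _, le_rfl]

end SimpleGraph

section DominatingInducedMatching

open SimpleGraph

variable {V : Type*} {G : SimpleGraph V} {M : Finset (Sym2 V)}

theorem IsMatchingSet.eq_of_mem_of_mem (h : IsMatchingSet G M) {u v w : V} (hv : s(u, v) ∈ M)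
    (hw : s(u, w) ∈ M) : v = w := by
  by_contra hvw
  exact h.2 _ hv _ hw (fun he => hvw (Sym2.congr_right.1 he))
    ⟨u, Sym2.mem_mk_left u v, Sym2.mem_mk_left u w⟩

theorem IsDIM.xor_matchedVert_of_adj (h : IsDIM G M) {u v : V} (hadj : G.Adj u v)
    (huv : s(u, v) ∉ M) : Xor (matchedVert M u) (matchedVert M v) := by
  obtain ⟨f, ⟨hf, w, hw, hwf⟩, huniq⟩ := h.2 s(u, v) (G.mem_edgeSet.2 hadj) huv
  have hone : matchedVert M u ∨ matchedVert M v := by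
    rcases Sym2.mem_iff.1 hw with rfl | rfl
    exacts [Or.inl ⟨f, hf, hwf⟩, Or.inr ⟨f, hf, hwf⟩]
  have hnot_both : ¬ (matchedVert M u ∧ matchedVert M v) := by
    rintro ⟨⟨e, he, hue⟩, ⟨e', he', hve'⟩⟩
    obtain rfl := huniq e ⟨he, u, Sym2.mem_mk_left u v, hue⟩
    obtain rfl := huniq e' ⟨he', v, Sym2.mem_mk_right u v, hve'⟩
    exact huv <| Sym2.eq_of_ne_mem hadj.ne hue hve' (Sym2.mem_mk_left u v)
      (Sym2.mem_mk_right u v) ▸ he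
  exact (xor_iff_or_and_not_and _ _).2 ⟨hone, hnot_both⟩

/-- The join of `M`, as a copy of `mK₂`, with the edgeless graph on the unmatched vertices. -/
def matchingJoin (M : Finset (Sym2 V)) : SimpleGraph V :=
  fromRel fun u v => s(u, v) ∈ M ∨ (matchedVert M u ∧ ¬ matchedVert M v)

theorem IsDIM.le_matchingJoin (h : IsDIM G M) : G ≤ matchingJoin M := by
  intro u v hadj
  refine ⟨hadj.ne, ?_⟩
  by_cases huv : s(u, v) ∈ M
  · exact Or.inl (Or.inl huv)
  · rcases h.xor_matchedVert_of_adj hadj huv with huv' | hvu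
    exacts [Or.inl (Or.inr huv'), Or.inr (Or.inr hvu)]

variable [Fintype V]

noncomputable def matchedVertices (M : Finset (Sym2 V)) : Finset V := {v | matchedVert M v}

@[simp]
theorem mem_matchedVertices {v : V} : v ∈ matchedVertices M ↔ matchedVert M v := by
  simp [matchedVertices]

variable [DecidableEq V]

theorem IsMatchingSet.card_matchedVertices (h : IsMatchingSet G M) :
    #(matchedVertices M) = 2 * #M := by
  have hS : matchedVertices M = M.biUnion fun e => {v | v ∈ e} := by
    ext v
    simp [matchedVert]
  rw [hS, card_biUnion, sum_const_nat fun e he => ?_, mul_comm]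
  · induction e using Sym2.ind with
    | _ a b =>
      have hab : a ≠ b := G.ne_of_adj (h.1 _ he)
      rw [show ({v | v ∈ s(a, b)} : Finset V) = {a, b} by ext; simp, card_pair hab]
  · intro e he f hf hef
    simp only [Function.onFun, Finset.disjoint_left, mem_filter, mem_univ, true_and]
    exact fun v hve hvf => h.2 e he f hf hef ⟨v, hve, hvf⟩

theorem IsMatchingSet.sum_sum_ite_mem_le (h : IsMatchingSet G M) {g : V → ℝ}
    (hg : ∀ i, 0 ≤ g i) :
    ∑ i, ∑ j, (if s(i, j) ∈ M then g i else 0) ≤ ∑ i ∈ matchedVertices M, g i := by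
  rw [matchedVertices, sum_filter]
  refine sum_le_sum fun i _ => ?_
  split_ifs with hi
  · rw [← sum_filter, sum_const, nsmul_eq_mul]
    have hpartner : #{j | s(i, j) ∈ M} ≤ 1 := card_le_one.2 fun a ha b hb =>
      h.eq_of_mem_of_mem (mem_filter.1 ha).2 (mem_filter.1 hb).2
    exact mul_le_of_le_one_left (hg i) (by exact_mod_cast hpartner)
  · exact (sum_eq_zero fun j _ => if_neg fun hj => hi ⟨_, hj, Sym2.mem_mk_left i j⟩).le

theorem IsMatchingSet.sum_sum_ite_mem_add_sq_le (h : IsMatchingSet G M) (x : V → ℝ) :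
    ∑ i, ∑ j, (if s(i, j) ∈ M then (x i + x j) ^ 2 else 0) ≤
      4 * ∑ i ∈ matchedVertices M, x i ^ 2 := by
  have hswap : ∑ i, ∑ j, (if s(i, j) ∈ M then x j ^ 2 else 0) =
      ∑ i, ∑ j, (if s(i, j) ∈ M then x i ^ 2 else 0) := by
    rw [sum_comm]; simp_rw [Sym2.eq_swap]
  calc _ ≤ ∑ i, ∑ j, (2 * (if s(i, j) ∈ M then x i ^ 2 else 0) +
          2 * (if s(i, j) ∈ M then x j ^ 2 else 0)) := by
        gcongr with i _ j _
        split_ifs <;> nlinarith [sq_nonneg (x i - x j)]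
    _ = 4 * ∑ i, ∑ j, (if s(i, j) ∈ M then x i ^ 2 else 0) := by
        simp only [sum_add_distrib, ← mul_sum, hswap]; ring
    _ ≤ _ := by gcongr; exact h.sum_sum_ite_mem_le fun i => sq_nonneg (x i)

theorem sum_sum_ite_matchingJoin_adj_le {f : V → V → ℝ} (hf : ∀ i j, 0 ≤ f i j) :
    ∑ i, ∑ j, (if (matchingJoin M).Adj i j then f i j else 0) ≤
      ∑ i, ∑ j, (if s(i, j) ∈ M then f i j else 0) +
        ∑ i ∈ matchedVertices M, ∑ j ∈ (matchedVertices M)ᶜ, f i j +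
        ∑ i ∈ matchedVertices M, ∑ j ∈ (matchedVertices M)ᶜ, f j i := by
  rw [sum_comm (s := matchedVertices M) (t := (matchedVertices M)ᶜ) (f := fun i j => f j i),
    ← sum_sum_ite_mem_and_mem (matchedVertices M),
    ← sum_sum_ite_mem_and_mem (matchedVertices M)ᶜ]
  simp only [← sum_add_distrib]
  gcongr with i _ j _
  simp only [matchingJoin, fromRel_adj, mem_compl, mem_matchedVertices, Sym2.eq_swap (a := j)]
  split_ifs <;> first | linarith [hf i j] | tauto

theorem IsMatchingSet.dotProduct_signlessLapMatrix_matchingJoin_mulVec_le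
    (h : IsMatchingSet G M) (x : V → ℝ) :
    x ⬝ᵥ ((matchingJoin M).signlessLapMatrix ℝ *ᵥ x) ≤
      (#(matchedVertices M)ᶜ + 2) * ∑ i ∈ matchedVertices M, x i ^ 2 +
        #(matchedVertices M) * ∑ i ∈ (matchedVertices M)ᶜ, x i ^ 2 +
        2 * (∑ i ∈ matchedVertices M, x i) * ∑ i ∈ (matchedVertices M)ᶜ, x i := by
  have hjoin := sum_sum_ite_matchingJoin_adj_le (M := M) (f := fun i j => (x i + x j) ^ 2)
    fun _ _ => sq_nonneg _
  simp only [add_comm (x _) (x _)] at hjoin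
  rw [sum_sum_add_sq] at hjoin
  rw [dotProduct_signlessLapMatrix_mulVec]
  linarith [h.sum_sum_ite_mem_add_sq_le x]

theorem IsDIM.dotProduct_signlessLapMatrix_mulVec_le [DecidableRel G.Adj] (h : IsDIM G M)
    (x : V → ℝ) :
    x ⬝ᵥ (G.signlessLapMatrix ℝ *ᵥ x) ≤
      (2 + Fintype.card V + √((2 + Fintype.card V) ^ 2 - 16 * #M)) / 2 * (x ⬝ᵥ x) := by
  set S := matchedVertices M
  have hS : (#S : ℝ) = 2 * #M := by exact_mod_cast h.1.card_matchedVertices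
  have hSSc : (#S : ℝ) + #Sᶜ = Fintype.card V := by exact_mod_cast card_add_card_compl S
  have hxx : x ⬝ᵥ x = ∑ i ∈ S, x i ^ 2 + ∑ i ∈ Sᶜ, x i ^ 2 := by
    rw [sum_add_sum_compl]; simp only [dotProduct, sq]
  calc _ ≤ x ⬝ᵥ ((matchingJoin M).signlessLapMatrix ℝ *ᵥ x) :=
        dotProduct_signlessLapMatrix_mulVec_mono h.le_matchingJoin x
    _ ≤ _ := h.1.dotProduct_signlessLapMatrix_matchingJoin_mulVec_le x
    _ ≤ (#S + #Sᶜ + 2 + √((#S + #Sᶜ + 2) ^ 2 - 8 * #S)) / 2 * (x ⬝ᵥ x) := by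
        rw [hxx]
        exact add_two_mul_mul_le_of_sq_le (by positivity) (by positivity)
          (sum_nonneg fun _ _ => sq_nonneg _) (sum_nonneg fun _ _ => sq_nonneg _)
          sq_sum_le_card_mul_sum_sq sq_sum_le_card_mul_sum_sq
    _ = _ := by
        rw [hSSc, hS]; ring_nf

end DominatingInducedMatching

theorem stmt_9_general (n m : ℕ) (G : SimpleGraph (Fin n)) [DecidableRel G.Adj]
    (M : Finset (Sym2 (Fin n))) (hM : IsDIM G M) (hcard : M.card = m)
    (q₁ : ℝ) (hq₁ : q₁ ∈ spectrum ℝ (G.degMatrix ℝ + G.adjMatrix ℝ)) :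
    q₁ ≤ (2 + (n : ℝ) + Real.sqrt ((2 + (n : ℝ))^2 - 16 * m)) / 2 := by
  obtain ⟨x, hx0, hx⟩ := exists_mulVec_eq_smul_of_mem_spectrum hq₁
  have hxx : 0 < x ⬝ᵥ x := by simpa using dotProduct_star_self_pos_iff.2 hx0
  have hbound := hM.dotProduct_signlessLapMatrix_mulVec_le x
  rw [SimpleGraph.signlessLapMatrix, hx, dotProduct_smul, smul_eq_mul, Fintype.card_fin,
    hcard] at hbound
  exact le_of_mul_le_mul_right hbound hxx

/-- If `G` has order `n` and a dominating induced matching of size `m`, then its largest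
signless Laplacian eigenvalue satisfies `q₁ ≤ (2+n+√((2+n)²−16m))/2`. -/
theorem stmt_9 (n m : ℕ) (G : SimpleGraph (Fin n)) [DecidableRel G.Adj]
    (M : Finset (Sym2 (Fin n))) (hM : IsDIM G M) (hcard : M.card = m)
    (q₁ : ℝ) (hq₁ : q₁ ∈ spectrum ℝ (G.degMatrix ℝ + G.adjMatrix ℝ))
    (hq₂ : ∀ μ ∈ spectrum ℝ (G.degMatrix ℝ + G.adjMatrix ℝ), μ ≤ q₁) :
    q₁ ≤ (2 + (n : ℝ) + Real.sqrt ((2 + (n : ℝ))^2 - 16 * m)) / 2 :=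
  stmt_9_general n m G M hM hcard q₁ hq₁
end

section
/- Let G be a graph of order n with a dominating induced matching, and let ρ be the spectral radius of its adjacency matrix. Then (n/2)² ≥ ρ(ρ−1), with equality if and only if n = 4m and G is the join of mK₂ with the empty graph on n−2m vertices (i.e., G has a complete dominating induced matching of size m = n/4). -/
open Matrix Finset
open scoped Classical

/-!
Let `X` be the `2m` vertices covered by the dominating induced matching `M` and `W` the
`q = n - 2m` others. Every vertex of `X` has exactly one neighbour in `X`, and `W` is
independent. Take a nonnegative eigenvector `y` for `ρ` (the entrywise absolute value of any
eigenvector, because `ρ • 1 - A` is positive semidefinite) and put `a = ∑_X y`, `b = ∑_W y`.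
Summing the eigenvalue equation over `X` and over `W` gives `ρ a ≤ a + 2m b` and `ρ b ≤ q a`,
so `ρ (ρ - 1) ≤ 2mq ≤ (n/2)²`.

In case of equality `q = 2m` and both sums are tight, which makes every matched vertex on which
`y` is positive adjacent to all of `W`, and every unmatched vertex on which `y` is positive
adjacent to all of `X`; positivity spreads along these edges, so the DIM is complete.
Conversely, for a complete DIM the vector equal to `r` on `X` and `2m` on `W`, where
`r (r - 1) = 2mq`, is an eigenvector.
-/

section Matching

variable {V : Type*} {G : SimpleGraph V} {M : Finset (Sym2 V)} {u v : V}

lemma IsMatchingSet.eq_of_mem_of_mem_s10 (hM : IsMatchingSet G M) {e f : Sym2 V}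
    (he : e ∈ M) (hf : f ∈ M) (hve : v ∈ e) (hvf : v ∈ f) : e = f := by
  by_contra hne
  exact hM.2 e he f hf hne ⟨v, hve, hvf⟩

lemma IsDIM.mk_mem_of_adj (hM : IsDIM G M) (hadj : G.Adj u v)
    (hu : matchedVert M u) (hv : matchedVert M v) : s(u, v) ∈ M := by
  by_contra hnot
  obtain ⟨e, he, hue⟩ := hu
  obtain ⟨f, hf, hvf⟩ := hv
  obtain ⟨g, -, hg⟩ := hM.2 s(u, v) (G.mem_edgeSet.mpr hadj) hnot
  have hef : e = f :=
    (hg e ⟨he, u, Sym2.mem_mk_left u v, hue⟩).trans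
      (hg f ⟨hf, v, Sym2.mem_mk_right u v, hvf⟩).symm
  subst hef
  exact hnot ((Sym2.mem_and_mem_iff hadj.ne).mp ⟨hue, hvf⟩ ▸ he)

lemma IsDIM.matchedVert_of_adj (hM : IsDIM G M) (hadj : G.Adj u v)
    (hu : ¬ matchedVert M u) : matchedVert M v := by
  have hnot : s(u, v) ∉ M := fun h => hu ⟨s(u, v), h, Sym2.mem_mk_left u v⟩
  obtain ⟨f, ⟨hf, w, hw, hwf⟩, -⟩ := hM.2 s(u, v) (G.mem_edgeSet.mpr hadj) hnot
  rcases Sym2.mem_iff.mp hw with rfl | rfl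
  · exact absurd ⟨f, hf, hwf⟩ hu
  · exact ⟨f, hf, hwf⟩

variable [Fintype V]

noncomputable def matchedFinset (M : Finset (Sym2 V)) : Finset V := {v | matchedVert M v}

@[simp]
lemma mem_matchedFinset : v ∈ matchedFinset M ↔ matchedVert M v := by
  simp [matchedFinset]

lemma IsMatchingSet.card_matchedFinset (hM : IsMatchingSet G M) :
    #(matchedFinset M) = 2 * #M := by
  have hunion : matchedFinset M = M.biUnion fun e => {v | v ∈ e} := by
    ext v
    simp [matchedVert]
  rw [hunion, card_biUnion, sum_const_nat, mul_comm]
  · intro e he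
    obtain ⟨a, b⟩ := e
    have hab : a ≠ b := G.ne_of_adj (hM.1 _ he)
    have : ({v | v ∈ s(a, b)} : Finset V) = {a, b} := by ext; simp
    rw [this, card_pair hab]
  · intro e he f hf hne
    simp only [Function.onFun, disjoint_filter]
    exact fun v _ hve hvf => hM.2 e he f hf hne ⟨v, hve, hvf⟩

lemma IsDIM.card_adj_matched [DecidableRel G.Adj] (hM : IsDIM G M) (hv : matchedVert M v) :
    #{u ∈ matchedFinset M | G.Adj v u} = 1 := by
  obtain ⟨e, he, hve⟩ := hv
  rw [card_eq_one]
  refine ⟨Sym2.Mem.other hve, eq_singleton_iff_unique_mem.mpr ⟨?_, ?_⟩⟩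
  · have hmem : s(v, Sym2.Mem.other hve) ∈ M := (Sym2.other_spec hve).symm ▸ he
    simp only [mem_filter, mem_matchedFinset]
    exact ⟨⟨_, hmem, Sym2.mem_mk_right _ _⟩, G.mem_edgeSet.mp (hM.1.1 _ hmem)⟩
  · simp only [mem_filter, mem_matchedFinset, and_imp]
    intro u hu hadj
    have := hM.1.eq_of_mem_of_mem_s10 (hM.mk_mem_of_adj hadj ⟨e, he, hve⟩ hu) he
      (Sym2.mem_mk_left v u) hve
    rw [← Sym2.other_spec hve] at this
    exact Sym2.congr_right.mp this

lemma IsDIM.card_adj_unmatched [DecidableEq V] [DecidableRel G.Adj] (hM : IsDIM G M)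
    (hv : ¬ matchedVert M v) :
    #{u ∈ (matchedFinset M)ᶜ | G.Adj v u} = 0 := by
  simp only [card_eq_zero, filter_eq_empty_iff, mem_compl, mem_matchedFinset]
  exact fun _ hu hadj => hu (hM.matchedVert_of_adj hadj hv)

end Matching

namespace Matrix

variable {ι : Type*} [Fintype ι]

lemma dotProduct_mulVec_le_abs {A : Matrix ι ι ℝ} (hA : ∀ i j, 0 ≤ A i j) (x : ι → ℝ) :
    x ⬝ᵥ A *ᵥ x ≤ |x| ⬝ᵥ A *ᵥ |x| := by
  simp only [dotProduct, mulVec, mul_sum, Pi.abs_apply]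
  refine sum_le_sum fun i _ => sum_le_sum fun j _ => ?_
  calc x i * (A i j * x j) ≤ |x i * (A i j * x j)| := le_abs_self _
    _ = |x i| * (A i j * |x j|) := by rw [abs_mul, abs_mul, abs_of_nonneg (hA i j)]

variable [DecidableEq ι]

lemma mem_spectrum_iff_exists_mulVec_eq_smul {K : Type*} [Field K] {A : Matrix ι ι K}
    {μ : K} :
    μ ∈ spectrum K A ↔ ∃ x ≠ 0, A *ᵥ x = μ • x := by
  rw [← spectrum_toLin', ← Module.End.hasEigenvalue_iff_mem_spectrum]
  constructor
  · intro h
    obtain ⟨x, hx⟩ := h.exists_hasEigenvector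
    exact ⟨x, hx.2, Module.End.mem_eigenspace_iff.mp hx.1⟩
  · rintro ⟨x, hx0, hx⟩
    exact Module.End.hasEigenvalue_of_hasEigenvector
      ⟨Module.End.mem_eigenspace_iff.mpr hx, hx0⟩

lemma algebraMap_mulVec {K : Type*} [Field K] (r : K) (x : ι → K) :
    algebraMap K (Matrix ι ι K) r *ᵥ x = r • x := by
  rw [Algebra.algebraMap_eq_smul_one, smul_mulVec, one_mulVec]

lemma IsHermitian.posSemidef_algebraMap_sub {A : Matrix ι ι ℝ} (hA : A.IsHermitian) {ρ : ℝ}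
    (hρ : ∀ μ ∈ spectrum ℝ A, μ ≤ ρ) :
    (algebraMap ℝ (Matrix ι ι ℝ) ρ - A).PosSemidef := by
  refine posSemidef_iff_isHermitian_and_spectrum_nonneg.mpr ⟨?_, ?_⟩
  · rw [algebraMap_eq_diagonal]
    exact (isHermitian_diagonal _).sub hA
  · rintro _ hμ
    rw [← spectrum.singleton_sub_eq] at hμ
    obtain ⟨_, rfl, ν, hν, rfl⟩ := hμ
    exact sub_nonneg.mpr (hρ ν hν)

lemma IsHermitian.exists_nonneg_eigenvector {A : Matrix ι ι ℝ} (hA : A.IsHermitian)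
    (hA0 : ∀ i j, 0 ≤ A i j) {ρ : ℝ} (hρ : ρ ∈ spectrum ℝ A)
    (hmax : ∀ μ ∈ spectrum ℝ A, μ ≤ ρ) :
    ∃ y ≠ 0, 0 ≤ y ∧ A *ᵥ y = ρ • y := by
  obtain ⟨x, hx0, hx⟩ := mem_spectrum_iff_exists_mulVec_eq_smul.mp hρ
  set P := algebraMap ℝ (Matrix ι ι ℝ) ρ - A
  have hP : P.PosSemidef := hA.posSemidef_algebraMap_sub hmax
  have hquad : ∀ z, z ⬝ᵥ P *ᵥ z = ρ * (z ⬝ᵥ z) - z ⬝ᵥ A *ᵥ z := fun z => by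
    rw [sub_mulVec, algebraMap_mulVec, dotProduct_sub, dotProduct_smul, smul_eq_mul]
  have habs : |x| ⬝ᵥ |x| = x ⬝ᵥ x := by
    simp only [dotProduct, Pi.abs_apply, abs_mul_abs_self]
  -- `x` is a zero of the nonnegative form `z ⬝ᵥ P *ᵥ z`, and `|x|` does no worse
  have hzero : |x| ⬝ᵥ P *ᵥ |x| = 0 := by
    refine le_antisymm ?_ (by simpa using hP.dotProduct_mulVec_nonneg |x|)
    have hxA : x ⬝ᵥ A *ᵥ x = ρ * (x ⬝ᵥ x) := by rw [hx, dotProduct_smul, smul_eq_mul]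
    rw [hquad, habs]
    linarith [dotProduct_mulVec_le_abs hA0 x]
  have hker : P *ᵥ |x| = 0 := (hP.dotProduct_mulVec_zero_iff |x|).mp (by simpa using hzero)
  refine ⟨|x|, by simpa using hx0, abs_nonneg x, ?_⟩
  rw [sub_mulVec, algebraMap_mulVec, sub_eq_zero] at hker
  exact hker.symm

end Matrix

section CountingSums

variable {ι κ : Type*} {s : Finset ι} {T : Finset κ} {r : ι → κ → Prop}
  [∀ i, DecidablePred (r i)] {y : ι → ℝ}

lemma sum_card_filter_mul_le (hy : ∀ i ∈ s, 0 ≤ y i) :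
    ∑ i ∈ s, (#{u ∈ T | r i u} : ℝ) * y i ≤ #T * ∑ i ∈ s, y i := by
  rw [mul_sum]
  exact sum_le_sum fun i hi =>
    mul_le_mul_of_nonneg_right (by exact_mod_cast card_filter_le T (r i)) (hy i hi)

lemma forall_of_sum_card_filter_mul_eq (hy : ∀ i ∈ s, 0 ≤ y i)
    (h : ∑ i ∈ s, (#{u ∈ T | r i u} : ℝ) * y i = #T * ∑ i ∈ s, y i) :
    ∀ i ∈ s, 0 < y i → ∀ u ∈ T, r i u := by
  intro i hi hyi
  rw [mul_sum, sum_eq_sum_iff_of_le fun i hi =>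
    mul_le_mul_of_nonneg_right (by exact_mod_cast card_filter_le T (r i)) (hy i hi)] at h
  have hcard : (#{u ∈ T | r i u} : ℝ) = #T := mul_right_cancel₀ hyi.ne' (h i hi)
  exact card_filter_eq_iff.mp (by exact_mod_cast hcard)

end CountingSums


lemma sum_add_sum_compl_pos {ι : Type*} [Fintype ι] [DecidableEq ι] {y : ι → ℝ}
    (hy : 0 ≤ y) (hy0 : y ≠ 0) (S : Finset ι) :
    0 < ∑ i ∈ S, y i + ∑ i ∈ Sᶜ, y i := by
  rw [sum_add_sum_compl]
  exact Fintype.sum_pos (hy.lt_of_ne (Ne.symm hy0))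

namespace SimpleGraph

variable {V : Type*} [Fintype V] (G : SimpleGraph V) [DecidableRel G.Adj]

lemma sum_adjMatrix_mulVec (S : Finset V) (y : V → ℝ) :
    ∑ v ∈ S, (G.adjMatrix ℝ *ᵥ y) v = ∑ u, (#{v ∈ S | G.Adj u v} : ℝ) * y u := by
  simp only [adjMatrix_mulVec_apply, neighborFinset_eq_filter, sum_filter]
  rw [sum_comm]
  refine sum_congr rfl fun u _ => ?_
  rw [← sum_filter, sum_const, nsmul_eq_mul]
  simp only [G.adj_comm]

lemma adjMatrix_mulVec_apply_eq_sum_add_sum [DecidableEq V] (S : Finset V) (y : V → ℝ)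
    (v : V) :
    (G.adjMatrix ℝ *ᵥ y) v =
      ∑ u ∈ S with G.Adj v u, y u + ∑ u ∈ Sᶜ with G.Adj v u, y u := by
  rw [adjMatrix_mulVec_apply, neighborFinset_eq_filter, sum_filter, sum_filter, sum_filter,
    sum_add_sum_compl]

section

variable {V : Type*} [Fintype V] {G : SimpleGraph V} [DecidableRel G.Adj] {ρ : ℝ} {y : V → ℝ}

lemma pos_of_adj_of_pos (hy : 0 ≤ y) (hAy : G.adjMatrix ℝ *ᵥ y = ρ • y) {u v : V}
    (hadj : G.Adj u v) (hv : 0 < y v) : 0 < y u := by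
  have h := congrFun hAy u
  rw [adjMatrix_mulVec_apply, Pi.smul_apply, smul_eq_mul] at h
  have hle : y v ≤ ρ * y u :=
    h ▸ single_le_sum (fun w _ => hy w) ((G.mem_neighborFinset u v).mpr hadj)
  have hu : 0 ≤ y u := hy u
  refine hu.lt_of_ne fun h0 => ?_
  rw [← h0, mul_zero] at hle
  linarith

end

end SimpleGraph

section BlockBounds

variable {ρ a b s t p q : ℝ}

lemma nonneg_of_block_eqs (ha : 0 ≤ a) (hab : 0 < a + b) (hs₀ : 0 ≤ s) (ht₀ : 0 ≤ t)
    (hρa : ρ * a = a + s) (hρb : ρ * b = t) : 0 ≤ ρ :=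
  nonneg_of_mul_nonneg_left (by nlinarith) hab

lemma pos_and_pos_of_block_eqs (ha : 0 ≤ a) (hb : 0 ≤ b) (hab : 0 < a + b)
    (hs : s ≤ p * b) (ht : t ≤ q * a) (hρa : ρ * a = a + s) (hρb : ρ * b = t)
    (hρ : 1 < ρ) :
    0 < a ∧ 0 < b := by
  rcases ha.eq_or_lt with rfl | ha
  · nlinarith
  rcases hb.eq_or_lt with rfl | hb
  · nlinarith
  exact ⟨ha, hb⟩

lemma mul_sub_one_le_of_block_eqs (ha : 0 ≤ a) (hb : 0 ≤ b) (hab : 0 < a + b)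
    (hs₀ : 0 ≤ s) (hs : s ≤ p * b) (ht₀ : 0 ≤ t) (ht : t ≤ q * a) (hp : 0 ≤ p)
    (hq : 0 ≤ q) (hρa : ρ * a = a + s) (hρb : ρ * b = t) : ρ * (ρ - 1) ≤ p * q := by
  rcases le_or_gt ρ 1 with hρ | hρ
  · nlinarith [nonneg_of_block_eqs ha hab hs₀ ht₀ hρa hρb]
  obtain ⟨ha, hb⟩ := pos_and_pos_of_block_eqs ha hb hab hs ht hρa hρb hρ
  have : ρ * (ρ - 1) * (a * b) ≤ p * q * (a * b) := by nlinarith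
  exact le_of_mul_le_mul_right this (mul_pos ha hb)

lemma block_bounds_eq_of_mul_sub_one_eq (hb : 0 < b) (hp : 0 < p) (hρ : 1 < ρ)
    (hs : s ≤ p * b) (ht : t ≤ q * a)
    (hρa : ρ * a = a + s) (hρb : ρ * b = t) (heq : ρ * (ρ - 1) = p * q) :
    s = p * b ∧ t = q * a := by
  have hst : s * t = p * b * (q * a) := by
    rw [show s = (ρ - 1) * a by linarith, ← hρb]
    linear_combination a * b * heq
  have ht₀ : 0 < t := by nlinarith
  have h₁ : s * t ≤ p * b * t := mul_le_mul_of_nonneg_right hs ht₀.le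
  have h₂ : p * b * t ≤ p * b * (q * a) := mul_le_mul_of_nonneg_left ht (by positivity)
  exact ⟨mul_right_cancel₀ ht₀.ne' (by linarith),
    mul_left_cancel₀ (a := p * b) (by positivity) (by linarith)⟩

end BlockBounds

section DIMSpectrum

variable {V : Type*} [Fintype V] [DecidableEq V] {G : SimpleGraph V} [DecidableRel G.Adj]
  {M : Finset (Sym2 V)} {ρ : ℝ} {y : V → ℝ}

lemma IsDIM.mul_sum_matched (hM : IsDIM G M) (hAy : G.adjMatrix ℝ *ᵥ y = ρ • y) :
    ρ * ∑ v ∈ matchedFinset M, y v = ∑ v ∈ matchedFinset M, y v +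
      ∑ u ∈ (matchedFinset M)ᶜ, (#{v ∈ matchedFinset M | G.Adj u v} : ℝ) * y u := by
  have h := G.sum_adjMatrix_mulVec (matchedFinset M) y
  rw [hAy, ← sum_add_sum_compl (matchedFinset M)] at h
  simp only [Pi.smul_apply, smul_eq_mul, ← mul_sum] at h
  rw [h]
  congr 1
  exact sum_congr rfl fun u hu => by
    rw [hM.card_adj_matched (mem_matchedFinset.mp hu), Nat.cast_one, one_mul]

lemma IsDIM.mul_sum_unmatched (hM : IsDIM G M) (hAy : G.adjMatrix ℝ *ᵥ y = ρ • y) :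
    ρ * ∑ v ∈ (matchedFinset M)ᶜ, y v =
      ∑ u ∈ matchedFinset M, (#{v ∈ (matchedFinset M)ᶜ | G.Adj u v} : ℝ) * y u := by
  have h := G.sum_adjMatrix_mulVec (matchedFinset M)ᶜ y
  rw [hAy, ← sum_add_sum_compl (matchedFinset M)] at h
  simp only [Pi.smul_apply, smul_eq_mul, ← mul_sum] at h
  rw [h, add_eq_left]
  exact sum_eq_zero fun u hu => by
    rw [hM.card_adj_unmatched (by simpa using hu), Nat.cast_zero, zero_mul]

lemma IsDIM.mul_sub_one_le (hM : IsDIM G M) (hy0 : y ≠ 0) (hy : 0 ≤ y)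
    (hAy : G.adjMatrix ℝ *ᵥ y = ρ • y) :
    ρ * (ρ - 1) ≤ (2 * #M : ℕ) * #(matchedFinset M)ᶜ := by
  rw [← hM.1.card_matchedFinset]
  exact mul_sub_one_le_of_block_eqs (sum_nonneg fun v _ => hy v) (sum_nonneg fun v _ => hy v)
    (sum_add_sum_compl_pos hy hy0 _) (sum_nonneg fun v _ => mul_nonneg (Nat.cast_nonneg _) (hy v))
    (sum_card_filter_mul_le fun v _ => hy v)
    (sum_nonneg fun v _ => mul_nonneg (Nat.cast_nonneg _) (hy v))
    (sum_card_filter_mul_le fun v _ => hy v) (Nat.cast_nonneg _) (Nat.cast_nonneg _)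
    (hM.mul_sum_matched hAy) (hM.mul_sum_unmatched hAy)

lemma IsDIM.isCompleteDIM_of_mul_sub_one_eq (hM : IsDIM G M) (hy0 : y ≠ 0) (hy : 0 ≤ y)
    (hAy : G.adjMatrix ℝ *ᵥ y = ρ • y) (hpos : 0 < #M * #(matchedFinset M)ᶜ)
    (heq : ρ * (ρ - 1) = (2 * #M : ℕ) * #(matchedFinset M)ᶜ) : IsCompleteDIM G M := by
  set X := matchedFinset M
  rw [← hM.1.card_matchedFinset] at heq
  have hp : (0 : ℝ) < #X := by
    rw [hM.1.card_matchedFinset]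
    exact_mod_cast Nat.mul_pos two_pos (pos_of_mul_pos_left hpos (by positivity))
  have hq : (0 : ℝ) < #Xᶜ := by exact_mod_cast pos_of_mul_pos_right hpos (by positivity)
  have hab := sum_add_sum_compl_pos hy hy0 X
  have ha₀ : 0 ≤ ∑ v ∈ X, y v := sum_nonneg fun v _ => hy v
  have hb₀ : 0 ≤ ∑ v ∈ Xᶜ, y v := sum_nonneg fun v _ => hy v
  have hs₀ : 0 ≤ ∑ v ∈ Xᶜ, (#{u ∈ X | G.Adj v u} : ℝ) * y v :=
    sum_nonneg fun v _ => mul_nonneg (Nat.cast_nonneg _) (hy v)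
  have ht₀ : 0 ≤ ∑ v ∈ X, (#{u ∈ Xᶜ | G.Adj v u} : ℝ) * y v :=
    sum_nonneg fun v _ => mul_nonneg (Nat.cast_nonneg _) (hy v)
  have hs := sum_card_filter_mul_le (s := Xᶜ) (T := X) (r := G.Adj) fun v _ => hy v
  have ht := sum_card_filter_mul_le (s := X) (T := Xᶜ) (r := G.Adj) fun v _ => hy v
  have hρa := hM.mul_sum_matched hAy
  have hρb := hM.mul_sum_unmatched hAy
  have hρ : 1 < ρ := by
    nlinarith [nonneg_of_block_eqs ha₀ hab hs₀ ht₀ hρa hρb, mul_pos hp hq]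
  obtain ⟨ha, hb⟩ := pos_and_pos_of_block_eqs ha₀ hb₀ hab hs ht hρa hρb hρ
  obtain ⟨hs, ht⟩ := block_bounds_eq_of_mul_sub_one_eq hb hp hρ hs ht hρa hρb heq
  have hWX := forall_of_sum_card_filter_mul_eq (fun v _ => hy v) hs
  have hXW := forall_of_sum_card_filter_mul_eq (fun v _ => hy v) ht
  obtain ⟨x₀, hx₀, hyx₀⟩ := (sum_pos_iff_of_nonneg fun v _ => hy v).mp ha
  refine ⟨hM, ?_, fun x z hx hz => ?_⟩
  · obtain ⟨z, hz⟩ := card_pos.mp (by exact_mod_cast hq : 0 < #Xᶜ)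
    exact ⟨z, by simpa [X] using hz⟩
  · have hz' : z ∈ Xᶜ := by simpa [X] using hz
    have hyz : 0 < y z := G.pos_of_adj_of_pos hy hAy (hXW x₀ hx₀ hyx₀ z hz').symm hyx₀
    exact (hWX z hz' hyz x (by simpa [X] using hx)).symm

end DIMSpectrum

section CompleteDIM

variable {V : Type*} [Fintype V] [DecidableEq V] {G : SimpleGraph V} [DecidableRel G.Adj]
  {M : Finset (Sym2 V)}

lemma IsCompleteDIM.mem_spectrum (hM : IsCompleteDIM G M) (hM₀ : M.Nonempty) {r : ℝ}
    (hr₀ : r ≠ 0) (hr : r * (r - 1) = (2 * #M : ℕ) * #(matchedFinset M)ᶜ) :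
    r ∈ spectrum ℝ (G.adjMatrix ℝ) := by
  set y : V → ℝ := fun v => if matchedVert M v then r else (2 * #M : ℕ)
  have hAy : ∀ v, (G.adjMatrix ℝ *ᵥ y) v = #{u ∈ matchedFinset M | G.Adj v u} * r +
      #{u ∈ (matchedFinset M)ᶜ | G.Adj v u} * (2 * #M : ℕ) := fun v => by
    have hyX : ∀ u ∈ {u ∈ matchedFinset M | G.Adj v u}, y u = r :=
      fun u hu => if_pos (by simpa using (mem_filter.mp hu).1)
    have hyW : ∀ u ∈ {u ∈ (matchedFinset M)ᶜ | G.Adj v u}, y u = (2 * #M : ℕ) :=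
      fun u hu => if_neg (by simpa using (mem_filter.mp hu).1)
    rw [G.adjMatrix_mulVec_apply_eq_sum_add_sum (matchedFinset M), sum_congr rfl hyX,
      sum_congr rfl hyW, sum_const, sum_const, nsmul_eq_mul, nsmul_eq_mul]
  obtain ⟨e, he⟩ := hM₀
  obtain ⟨w, hw⟩ : ∃ w, w ∈ e := ⟨e.out.1, Sym2.out_fst_mem e⟩
  refine Matrix.mem_spectrum_iff_exists_mulVec_eq_smul.mpr
    ⟨y, fun h => hr₀ ?_, funext fun v => ?_⟩
  · simpa [y, show matchedVert M w from ⟨e, he, hw⟩] using congrFun h w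
  rw [hAy, Pi.smul_apply, smul_eq_mul]
  by_cases hv : matchedVert M v
  · have hfull : #{u ∈ (matchedFinset M)ᶜ | G.Adj v u} = #(matchedFinset M)ᶜ :=
      card_filter_eq_iff.mpr fun u hu => hM.2.2 v u hv (by simpa using hu)
    rw [show y v = r from if_pos hv, hM.1.card_adj_matched hv, hfull]
    linear_combination -hr
  · have hfull : #{u ∈ matchedFinset M | G.Adj v u} = #(matchedFinset M) :=
      card_filter_eq_iff.mpr fun u hu => (hM.2.2 u v (by simpa using hu) hv).symm
    rw [show y v = (2 * #M : ℕ) from if_neg hv, hM.1.card_adj_unmatched hv, hfull,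
      hM.1.1.card_matchedFinset]
    push_cast
    ring

end CompleteDIM

lemma exists_one_le_mul_sub_one_eq {c : ℝ} (hc : 0 ≤ c) :
    ∃ r, 1 ≤ r ∧ r * (r - 1) = c := by
  refine ⟨(1 + √(1 + 4 * c)) / 2, ?_, ?_⟩
  · linarith [Real.one_le_sqrt.mpr (by linarith : 1 ≤ 1 + 4 * c)]
  · linear_combination (Real.sq_sqrt (by linarith : 0 ≤ 1 + 4 * c)) / 4

/-- If `G` has order `n` and a dominating induced matching `M` of size `m`, then
`(n/2)² ≥ ρ(ρ−1)` where `ρ` is the adjacency spectral radius, with equality iff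
`n = 4m` and `M` is a complete dominating induced matching of `G`. -/
theorem stmt_10 (n m : ℕ) (G : SimpleGraph (Fin n)) [DecidableRel G.Adj]
    (M : Finset (Sym2 (Fin n))) (hM : IsDIM G M) (hcard : M.card = m)
    (ρ : ℝ) (hρ₁ : ρ ∈ spectrum ℝ (G.adjMatrix ℝ))
    (hρ₂ : ∀ μ ∈ spectrum ℝ (G.adjMatrix ℝ), μ ≤ ρ) :
    ((n : ℝ) / 2)^2 ≥ ρ * (ρ - 1) ∧
      (((n : ℝ) / 2)^2 = ρ * (ρ - 1) ↔ n = 4 * m ∧ IsCompleteDIM G M) := by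
  obtain ⟨y, hy0, hy, hAy⟩ := (isHermitian_iff_isSymm.mpr G.isSymm_adjMatrix)
    |>.exists_nonneg_eigenvector (fun i j => by rw [SimpleGraph.adjMatrix_apply]; positivity)
      hρ₁ hρ₂
  have hn₀ : 0 < n := (Function.ne_iff.mp hy0).choose.pos
  set q := #(matchedFinset M)ᶜ
  have hn : n = 2 * m + q := by
    rw [← hcard, ← hM.1.card_matchedFinset, card_add_card_compl, Fintype.card_fin]
  have hbound : ρ * (ρ - 1) ≤ 2 * m * q := by
    simpa [hcard] using hM.mul_sub_one_le hy0 hy hAy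
  have hamgm : (2 * m * q : ℝ) ≤ ((n : ℝ) / 2) ^ 2 := by
    rw [hn]; push_cast; nlinarith [sq_nonneg ((2 * m : ℝ) - q)]
  refine ⟨hbound.trans hamgm, fun heq => ?_, fun ⟨hn4, hc⟩ => ?_⟩
  · have hsq : ((2 * m : ℝ) - q) ^ 2 = 0 := by
      refine le_antisymm ?_ (sq_nonneg _)
      rw [hn] at heq; push_cast at heq; nlinarith
    have hq : q = 2 * m := by
      exact_mod_cast (sub_eq_zero.mp (pow_eq_zero_iff two_ne_zero |>.mp hsq)).symm
    refine ⟨by omega, hM.isCompleteDIM_of_mul_sub_one_eq hy0 hy hAy ?_ ?_⟩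
    · rw [hcard]; change 0 < m * q; rw [hq]; exact Nat.mul_pos (by omega) (by omega)
    · rw [hcard]; push_cast; linarith
  · have hq : q = 2 * m := by omega
    have hM₀ : M.Nonempty := card_pos.mp (by omega)
    obtain ⟨r, hr₁, hr⟩ :=
      exists_one_le_mul_sub_one_eq (by positivity : (0 : ℝ) ≤ 2 * m * q)
    have hrρ : r ≤ ρ :=
      hρ₂ r (hc.mem_spectrum hM₀ (by positivity) (by rw [hcard]; push_cast; exact hr))
    have hsq : (2 * m * q : ℝ) = ((n : ℝ) / 2) ^ 2 := by
      rw [hn, hq]; push_cast; ring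
    nlinarith [mul_nonneg (sub_nonneg.mpr hrρ) (by linarith : (0 : ℝ) ≤ ρ + r - 1)]
end
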